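/- Let X be a metric space, E a compact metric space, and u : X × E → ℝ a locally bounded function. Define H u(x) = sup_{e ∈ E} u(x,e) and let overline(·) denote upper semicontinuous envelope. Then overline(H u)(x) ≤ sup_{e ∈ E} ū(x,e) for every x ∈ X. -/

import Mathlib

/-- The upper semicontinuous envelope of a function: `ū(y) = limsup_{y' → y} u(y')`. -/
noncomputable def uscEnv {Y : Type*} [TopologicalSpace Y] (u : Y → ℝ) (y : Y) : ℝ :=
  Filter.limsup u (nhds y)

open Filter Set

/-- Tube lemma for eventual predicates over a compact fiber. -/
lemma tube_eventually {X E : Type*} [TopologicalSpace X] [TopologicalSpace E]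
    [CompactSpace E] (x : X) (P : X × E → Prop)
    (h : ∀ e : E, ∀ᶠ p in nhds (x, e), P p) :
    ∀ᶠ x' in nhds x, ∀ e : E, P (x', e) := by
  have h' : ∀ e : E, ∃ U ∈ nhds x, ∃ V ∈ nhds e, U ×ˢ V ⊆ {p : X × E | P p} := by
    intro e
    exact mem_nhds_prod_iff.mp (h e)
  choose U hU V hV hsub using h'
  have hcover : (univ : Set E) ⊆ ⋃ e, interior (V e) := by
    intro e _
    exact mem_iUnion.mpr ⟨e, mem_interior_iff_mem_nhds.mpr (hV e)⟩
  obtain ⟨t, ht⟩ := isCompact_univ.elim_finite_subcover (fun e => interior (V e))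
    (fun _ => isOpen_interior) hcover
  have hUmem : (⋂ e ∈ t, U e) ∈ nhds x :=
    (Filter.biInter_mem t.finite_toSet).mpr fun e _ => hU e
  filter_upwards [hUmem] with x' hx' e'
  obtain ⟨e, het, he'⟩ := mem_iUnion₂.mp (ht (mem_univ e'))
  exact hsub e ⟨mem_iInter₂.mp hx' e het, interior_subset he'⟩

theorem uscEnv_sup_le_sup_uscEnv {X E : Type*} [MetricSpace X] [MetricSpace E]
    [CompactSpace E] (u : X × E → ℝ)
    (hloc : ∀ p : X × E, ∃ s ∈ nhds p, Bornology.IsBounded (u '' s)) :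
    ∀ x : X, uscEnv (fun x' : X => ⨆ e : E, u (x', e)) x ≤ ⨆ e : E, uscEnv u (x, e) := by
  intro x
  unfold uscEnv
  rcases isEmpty_or_nonempty E with hE | hE
  · simp [Real.iSup_of_isEmpty, Filter.limsup_const]
  -- Step 1: a uniform bound on `u` on a tube around `{x} × E`.
  obtain ⟨m, M, hmM⟩ : ∃ m M : ℝ, ∀ᶠ x' in nhds x, ∀ e : E, u (x', e) ∈ Set.Icc m M := by
    have h' : ∀ e : E, ∃ U ∈ nhds x, ∃ V ∈ nhds e,
        Bornology.IsBounded (u '' (U ×ˢ V)) := by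
      intro e
      obtain ⟨s, hs, hbdd⟩ := hloc (x, e)
      obtain ⟨U, hU, V, hV, hUV⟩ := mem_nhds_prod_iff.mp hs
      exact ⟨U, hU, V, hV, hbdd.subset (Set.image_mono hUV)⟩
    choose U hU V hV hbdd using h'
    have hcover : (univ : Set E) ⊆ ⋃ e, interior (V e) := by
      intro e _
      exact mem_iUnion.mpr ⟨e, mem_interior_iff_mem_nhds.mpr (hV e)⟩
    obtain ⟨t, ht⟩ := isCompact_univ.elim_finite_subcover (fun e => interior (V e))
      (fun _ => isOpen_interior) hcover
    have hB : Bornology.IsBounded (⋃ e ∈ t, u '' (U e ×ˢ V e)) :=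
      (Bornology.isBounded_biUnion t.finite_toSet).mpr fun e _ => hbdd e
    obtain ⟨hbb, hba⟩ := isBounded_iff_bddBelow_bddAbove.mp hB
    obtain ⟨m, hm⟩ := hbb
    obtain ⟨M, hM⟩ := hba
    refine ⟨m, M, ?_⟩
    have hUmem : (⋂ e ∈ t, U e) ∈ nhds x :=
      (Filter.biInter_mem t.finite_toSet).mpr fun e _ => hU e
    filter_upwards [hUmem] with x' hx' e'
    obtain ⟨e, het, he'⟩ := mem_iUnion₂.mp (ht (mem_univ e'))
    have hmem : u (x', e') ∈ ⋃ e ∈ t, u '' (U e ×ˢ V e) :=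
      mem_iUnion₂.mpr ⟨e, het,
        Set.mem_image_of_mem u ⟨mem_iInter₂.mp hx' e het, interior_subset he'⟩⟩
    exact ⟨hm hmem, hM hmem⟩
  -- transfer the bound to neighborhoods of each `(x, e)`
  have hUb : ∀ e : E, ∀ᶠ p in nhds (x, e), u p ∈ Set.Icc m M := by
    intro e
    have hf : Filter.Tendsto Prod.fst (nhds (x, e)) (nhds x) :=
      continuous_fst.tendsto (x, e)
    filter_upwards [hf.eventually hmM] with p hp
    exact hp p.2
  have hBddAbove : ∀ e : E, Filter.IsBoundedUnder (· ≤ ·) (nhds (x, e)) u :=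
    fun e => ⟨M, (hUb e).mono fun p hp => hp.2⟩
  have hlimsup_le : ∀ e : E, Filter.limsup u (nhds (x, e)) ≤ M := fun e =>
    Filter.limsup_le_of_le
      (Filter.isCoboundedUnder_le_of_eventually_le _ ((hUb e).mono fun p hp => hp.1))
      ((hUb e).mono fun p hp => hp.2)
  have hrange : BddAbove (Set.range fun e : E => Filter.limsup u (nhds (x, e))) :=
    ⟨M, by rintro _ ⟨e, rfl⟩; exact hlimsup_le e⟩
  set M0 := ⨆ e : E, Filter.limsup u (nhds (x, e)) with hM0
  -- Step 2: show limsup ≤ c for any c > M0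
  have key : ∀ c : ℝ, M0 < c →
      Filter.limsup (fun x' : X => ⨆ e : E, u (x', e)) (nhds x) ≤ c := by
    intro c hc
    have hev : ∀ e : E, ∀ᶠ p in nhds (x, e), u p < c := by
      intro e
      have h1 : Filter.limsup u (nhds (x, e)) < c :=
        lt_of_le_of_lt (le_ciSup hrange e) hc
      exact Filter.eventually_lt_of_limsup_lt h1 (hBddAbove e)
    have htube := tube_eventually x (fun p => u p < c) hev
    have hle : ∀ᶠ x' in nhds x, (⨆ e : E, u (x', e)) ≤ c := by
      filter_upwards [htube] with x' hx'
      exact ciSup_le fun e => le_of_lt (hx' e)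
    have hcb : Filter.IsCoboundedUnder (· ≤ ·) (nhds x)
        (fun x' : X => ⨆ e : E, u (x', e)) := by
      refine Filter.isCoboundedUnder_le_of_eventually_le _ (x := m) ?_
      filter_upwards [hmM] with x' hx'
      obtain ⟨e0⟩ := hE
      calc m ≤ u (x', e0) := (hx' e0).1
        _ ≤ ⨆ e : E, u (x', e) :=
            le_ciSup ⟨M, by rintro _ ⟨e, rfl⟩; exact (hx' e).2⟩ e0
    exact Filter.limsup_le_of_le hcb hle
  exact le_of_forall_gt_imp_ge_of_dense key
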